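/- Let β be a positive integer and m ≥ 1 a real number. Let x_1,…,x_{2β} be i.i.d. arcsine-distributed random variables and h a Nakagami-m amplitude independent of them. Then for any reals ε₁, ε₂, the harvested DC without a correlator for the unmodulated chaotic symbol satisfies ε₁·E[h²·Σ_{k=1}^{2β} x_k²] + ε₂·E[h⁴·Σ_{k=1}^{2β} x_k⁴] = ε₁·β + ε₂·(3(1+m)/(4m))·β. -/

import Mathlib

open MeasureTheory ProbabilityTheory
open scoped ENNReal

/-- The arcsine (Chebyshev invariant) distribution on (−1,1), with density
1/(π√(1−x²)) for |x| < 1 and 0 otherwise. -/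
noncomputable def arcsineMeasure : Measure ℝ :=
  volume.withDensity fun x =>
    ENNReal.ofReal (if |x| < 1 then 1 / (Real.pi * Real.sqrt (1 - x ^ 2)) else 0)

/-- The uniform distribution on {−1, +1}. -/
noncomputable def rademacherMeasure : Measure ℝ :=
  (1 / 2 : ℝ≥0∞) • Measure.dirac (-1) + (1 / 2 : ℝ≥0∞) • Measure.dirac 1

/-- The distribution of a unit-mean-power Nakagami-m amplitude, with density
2 m^m z^{2m−1} e^{−m z²}/Γ(m) for z ≥ 0 and 0 otherwise. -/
noncomputable def nakagamiMeasure (m : ℝ) : Measure ℝ :=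
  volume.withDensity fun z =>
    ENNReal.ofReal (if 0 ≤ z then
      2 * m ^ m * z ^ (2 * m - 1) * Real.exp (-m * z ^ 2) / Real.Gamma m else 0)

/-! Independence factorises each expectation as `2β · E[h^p] · E[x^p]`. The Nakagami moments
`E[h^n] = m^(-n/2) Γ(m + n/2) / Γ(m)` are Gamma integrals. The even arcsine moments
`E[x^(2n)] = C(2n, n) / 4^n` follow from the recursion `E[x^(n+2)] = (n+1)/(n+2) · E[x^n]`,
obtained by integrating by parts; since the density is singular at `±1`, the recursion is run on
explicit antiderivatives, and the improper integrals converge because the integrands are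
nonnegative. -/

open Set Real

section WithDensity

variable {α : Type*} {s : Set α} {d : α → ℝ}

lemma toNNReal_indicator_smul_eq_indicator_mul (hd0 : ∀ x ∈ s, 0 ≤ d x) (f : α → ℝ) :
    (fun x => (s.indicator d x).toNNReal • f x) = s.indicator (d * f) := by
  funext x
  by_cases hx : x ∈ s
  · simp [hx, NNReal.smul_def, Real.coe_toNNReal _ (hd0 x hx)]
  · simp [hx]

variable [MeasurableSpace α] {μ : Measure α}

lemma integral_withDensity_ofReal_indicator (hs : MeasurableSet s) (hd : Measurable d)
    (hd0 : ∀ x ∈ s, 0 ≤ d x) (f : α → ℝ) :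
    ∫ x, f x ∂μ.withDensity (fun x => ENNReal.ofReal (s.indicator d x))
      = ∫ x in s, d x * f x ∂μ := by
  rw [← integral_indicator hs]
  exact (integral_withDensity_eq_integral_smul ((hd.indicator hs).real_toNNReal) f).trans
    (congrArg _ (toNNReal_indicator_smul_eq_indicator_mul hd0 f))

lemma integrable_withDensity_ofReal_indicator_iff (hs : MeasurableSet s) (hd : Measurable d)
    (hd0 : ∀ x ∈ s, 0 ≤ d x) {f : α → ℝ} :
    Integrable f (μ.withDensity fun x => ENNReal.ofReal (s.indicator d x))
      ↔ IntegrableOn (fun x => d x * f x) s μ := by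
  rw [← integrable_indicator_iff hs]
  exact (integrable_withDensity_iff_integrable_smul ((hd.indicator hs).real_toNNReal)).trans
    (by rw [toNNReal_indicator_smul_eq_indicator_mul hd0 f]; rfl)

end WithDensity

section Arcsine

lemma arcsineMeasure_eq_withDensity_indicator :
    arcsineMeasure = volume.withDensity fun x =>
      ENNReal.ofReal ((Ioo (-1) 1).indicator (fun x => (π * √(1 - x ^ 2))⁻¹) x) := by
  unfold arcsineMeasure
  simp only [indicator, mem_Ioo, abs_lt, one_div]

lemma integral_arcsineMeasure (f : ℝ → ℝ) :
    ∫ x, f x ∂arcsineMeasure = ∫ x in Ioo (-1) 1, (π * √(1 - x ^ 2))⁻¹ * f x := by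
  rw [arcsineMeasure_eq_withDensity_indicator]
  exact integral_withDensity_ofReal_indicator measurableSet_Ioo (by fun_prop)
    (fun x _ => by positivity) f

lemma integrable_arcsineMeasure_iff {f : ℝ → ℝ} :
    Integrable f arcsineMeasure
      ↔ IntegrableOn (fun x => (π * √(1 - x ^ 2))⁻¹ * f x) (Ioo (-1) 1) := by
  rw [arcsineMeasure_eq_withDensity_indicator]
  exact integrable_withDensity_ofReal_indicator_iff measurableSet_Ioo (by fun_prop)
    (fun x _ => by positivity)

lemma integral_arcsineMeasure_eq_sub_of_hasDerivAt {f F : ℝ → ℝ}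
    (hF : ContinuousOn F (Icc (-1) 1))
    (hderiv : ∀ x ∈ Ioo (-1 : ℝ) 1, HasDerivAt F ((π * √(1 - x ^ 2))⁻¹ * f x) x)
    (hf : ∀ x ∈ Ioo (-1 : ℝ) 1, 0 ≤ f x) :
    Integrable f arcsineMeasure ∧ ∫ x, f x ∂arcsineMeasure = F 1 - F (-1) := by
  have hint : IntegrableOn (fun x => (π * √(1 - x ^ 2))⁻¹ * f x) (Ioc (-1) 1) :=
    intervalIntegral.integrableOn_deriv_of_nonneg hF hderiv
      (fun x hx => mul_nonneg (by positivity) (hf x hx))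
  refine ⟨integrable_arcsineMeasure_iff.2 (hint.mono_set Ioo_subset_Ioc_self), ?_⟩
  rw [integral_arcsineMeasure, ← integral_Ioc_eq_integral_Ioo,
    ← intervalIntegral.integral_of_le (by norm_num)]
  exact intervalIntegral.integral_eq_sub_of_hasDeriv_right_of_le (by norm_num) hF
    (fun x hx => (hderiv x hx).hasDerivWithinAt)
    ((intervalIntegrable_iff_integrableOn_Ioc_of_le (by norm_num)).2 hint)

lemma hasDerivAt_arcsin_div_pi {x : ℝ} (hx : x ∈ Ioo (-1 : ℝ) 1) :
    HasDerivAt (fun y => arcsin y / π) ((π * √(1 - x ^ 2))⁻¹ * x ^ 0) x := by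
  refine ((hasDerivAt_arcsin hx.1.ne' hx.2.ne).div_const π).congr_deriv ?_
  field_simp

lemma hasDerivAt_sqrt_one_sub_sq {x : ℝ} (hx : x ∈ Ioo (-1 : ℝ) 1) :
    HasDerivAt (fun y => √(1 - y ^ 2)) (-x / √(1 - x ^ 2)) x := by
  have hpos : 0 < 1 - x ^ 2 := by nlinarith [hx.1, hx.2]
  refine (((hasDerivAt_pow 2 x).const_sub 1).sqrt hpos.ne').congr_deriv ?_
  field_simp
  ring

/-- Integration by parts against `x ^ (n + 1) * √(1 - x ^ 2)`. -/
lemma hasDerivAt_arcsine_moment_add_two {F : ℝ → ℝ} {n : ℕ} {x : ℝ} (hx : x ∈ Ioo (-1 : ℝ) 1)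
    (hF : HasDerivAt F ((π * √(1 - x ^ 2))⁻¹ * x ^ n) x) :
    HasDerivAt (fun y => ((n + 1) * F y - y ^ (n + 1) * √(1 - y ^ 2) / π) / (n + 2))
      ((π * √(1 - x ^ 2))⁻¹ * x ^ (n + 2)) x := by
  have hpos : 0 < 1 - x ^ 2 := by nlinarith [hx.1, hx.2]
  have hsq : √(1 - x ^ 2) ^ 2 = 1 - x ^ 2 := sq_sqrt hpos.le
  refine (((hF.const_mul (n + 1 : ℝ)).sub
    (((hasDerivAt_pow (n + 1) x).mul (hasDerivAt_sqrt_one_sub_sq hx)).div_const π)).div_const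
      (n + 2 : ℝ)).congr_deriv ?_
  field_simp
  rw [hsq, Nat.add_sub_cancel]
  push_cast
  ring

lemma exists_arcsine_moment_antideriv (n : ℕ) :
    ∃ F : ℝ → ℝ, ContinuousOn F (Icc (-1) 1) ∧
      (∀ x ∈ Ioo (-1 : ℝ) 1, HasDerivAt F ((π * √(1 - x ^ 2))⁻¹ * x ^ (2 * n)) x) ∧
      F 1 - F (-1) = n.centralBinom / 4 ^ n := by
  induction n with
  | zero =>
    refine ⟨fun y => arcsin y / π, (continuous_arcsin.div_const π).continuousOn,
      fun x hx => hasDerivAt_arcsin_div_pi hx, ?_⟩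
    simp only [arcsin_one, arcsin_neg]
    field_simp
    norm_num
  | succ n ih =>
    obtain ⟨F, hFc, hFd, hF⟩ := ih
    rw [show 2 * (n + 1) = 2 * n + 2 by ring]
    refine ⟨_, ?_, fun x hx => hasDerivAt_arcsine_moment_add_two hx (hFd x hx), ?_⟩
    · exact ((continuousOn_const.mul hFc).sub (((continuous_pow _).mul
        (continuous_const.sub (continuous_pow 2)).sqrt).div_const π).continuousOn).div_const _
    · have hrec : ((n + 1 : ℕ) : ℝ) * (n + 1).centralBinom = 2 * (2 * n + 1) * n.centralBinom := by
        exact_mod_cast Nat.succ_mul_centralBinom_succ n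
      simp only [one_pow, sub_self, neg_one_sq, sqrt_zero, mul_zero, zero_div, sub_zero]
      rw [← sub_div, ← mul_sub, hF]
      push_cast at hrec ⊢
      field_simp
      linear_combination (-2 * 4 ^ n) * hrec

lemma integrable_pow_arcsineMeasure (n : ℕ) :
    Integrable (fun x => x ^ (2 * n)) arcsineMeasure := by
  obtain ⟨F, hFc, hFd, -⟩ := exists_arcsine_moment_antideriv n
  exact (integral_arcsineMeasure_eq_sub_of_hasDerivAt hFc hFd
    fun x _ => (even_two_mul n).pow_nonneg x).1

lemma integral_pow_arcsineMeasure (n : ℕ) :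
    ∫ x, x ^ (2 * n) ∂arcsineMeasure = n.centralBinom / 4 ^ n := by
  obtain ⟨F, hFc, hFd, hF⟩ := exists_arcsine_moment_antideriv n
  rw [← hF]
  exact (integral_arcsineMeasure_eq_sub_of_hasDerivAt hFc hFd
    fun x _ => (even_two_mul n).pow_nonneg x).2

lemma integral_sq_arcsineMeasure : ∫ x, x ^ 2 ∂arcsineMeasure = 1 / 2 := by
  have := integral_pow_arcsineMeasure 1
  norm_num [Nat.centralBinom] at this
  exact this

lemma integral_pow_four_arcsineMeasure : ∫ x, x ^ 4 ∂arcsineMeasure = 3 / 8 := by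
  have := integral_pow_arcsineMeasure 2
  norm_num [Nat.centralBinom, Nat.choose] at this
  exact this

end Arcsine

section Nakagami

variable {m : ℝ}

lemma nakagamiMeasure_eq_withDensity_indicator :
    nakagamiMeasure m = volume.withDensity fun z => ENNReal.ofReal ((Ici 0).indicator
      (fun z => 2 * m ^ m * z ^ (2 * m - 1) * exp (-m * z ^ 2) / Gamma m) z) := by
  unfold nakagamiMeasure
  simp only [indicator, mem_Ici]

lemma nakagami_density_nonneg (hm : 0 < m) {z : ℝ} (hz : 0 ≤ z) :
    0 ≤ 2 * m ^ m * z ^ (2 * m - 1) * exp (-m * z ^ 2) / Gamma m := by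
  have := Gamma_pos_of_pos hm
  have := rpow_nonneg hm.le m
  have := rpow_nonneg hz (2 * m - 1)
  positivity

lemma integral_nakagamiMeasure (hm : 0 < m) (f : ℝ → ℝ) :
    ∫ z, f z ∂nakagamiMeasure m
      = ∫ z in Ioi 0, 2 * m ^ m * z ^ (2 * m - 1) * exp (-m * z ^ 2) / Gamma m * f z := by
  rw [nakagamiMeasure_eq_withDensity_indicator, ← integral_Ici_eq_integral_Ioi]
  exact integral_withDensity_ofReal_indicator measurableSet_Ici (by fun_prop)
    (fun _ hz => nakagami_density_nonneg hm hz) f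

lemma integrable_nakagamiMeasure_iff (hm : 0 < m) {f : ℝ → ℝ} :
    Integrable f (nakagamiMeasure m) ↔ IntegrableOn
      (fun z => 2 * m ^ m * z ^ (2 * m - 1) * exp (-m * z ^ 2) / Gamma m * f z) (Ioi 0) := by
  rw [nakagamiMeasure_eq_withDensity_indicator, ← integrableOn_Ici_iff_integrableOn_Ioi]
  exact integrable_withDensity_ofReal_indicator_iff measurableSet_Ici (by fun_prop)
    (fun _ hz => nakagami_density_nonneg hm hz)

lemma nakagami_density_mul_pow_eqOn (n : ℕ) :
    EqOn (fun z => 2 * m ^ m * z ^ (2 * m - 1) * exp (-m * z ^ 2) / Gamma m * z ^ n)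
      (fun z => 2 * m ^ m / Gamma m * (z ^ (2 * m - 1 + n) * exp (-m * z ^ (2 : ℝ)))) (Ioi 0) := by
  intro z hz
  simp only [rpow_add hz, rpow_natCast, rpow_two]
  ring

lemma integrable_pow_nakagamiMeasure (hm : 0 < m) (n : ℕ) :
    Integrable (fun z => z ^ n) (nakagamiMeasure m) := by
  rw [integrable_nakagamiMeasure_iff hm, integrableOn_congr_fun (nakagami_density_mul_pow_eqOn n)
    measurableSet_Ioi]
  exact (integrableOn_rpow_mul_exp_neg_mul_rpow (by linarith [n.cast_nonneg (α := ℝ)])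
    two_pos hm).const_mul _

lemma integral_pow_nakagamiMeasure (hm : 0 < m) (n : ℕ) :
    ∫ z, z ^ n ∂nakagamiMeasure m = m ^ (-(n / 2 : ℝ)) * Gamma (m + n / 2) / Gamma m := by
  rw [integral_nakagamiMeasure hm, setIntegral_congr_fun measurableSet_Ioi
    (nakagami_density_mul_pow_eqOn n), integral_const_mul, integral_rpow_mul_exp_neg_mul_rpow
    two_pos (by linarith [n.cast_nonneg (α := ℝ)]) hm]
  have hexp : -(2 * m - 1 + n + 1) / 2 = -m + -(n / 2 : ℝ) := by ring
  rw [hexp, rpow_add hm, rpow_neg hm.le m, show (2 * m - 1 + n + 1) / 2 = m + n / 2 by ring]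
  have := (Gamma_pos_of_pos hm).ne'
  field_simp

lemma integral_sq_nakagamiMeasure (hm : 0 < m) : ∫ z, z ^ 2 ∂nakagamiMeasure m = 1 := by
  rw [integral_pow_nakagamiMeasure hm, show -((2 : ℕ) / 2 : ℝ) = -1 by norm_num, rpow_neg_one,
    show m + (2 : ℕ) / 2 = m + 1 by norm_num, Gamma_add_one hm.ne']
  have := (Gamma_pos_of_pos hm).ne'
  field_simp

lemma integral_pow_four_nakagamiMeasure (hm : 0 < m) :
    ∫ z, z ^ 4 ∂nakagamiMeasure m = (1 + m) / m := by
  rw [integral_pow_nakagamiMeasure hm, show -((4 : ℕ) / 2 : ℝ) = -(2 : ℕ) by norm_num,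
    rpow_neg hm.le, rpow_natCast, show m + (4 : ℕ) / 2 = m + 1 + 1 by norm_num; ring,
    Gamma_add_one (by positivity), Gamma_add_one hm.ne']
  have := (Gamma_pos_of_pos hm).ne'
  field_simp
  ring

end Nakagami

lemma integral_comp_mul_sum_comp_of_indepFun {Ω ι : Type*} [MeasurableSpace Ω] {P : Measure Ω}
    [Fintype ι] {h : Ω → ℝ} {x : ι → Ω → ℝ} {μ ν : Measure ℝ} {f g : ℝ → ℝ}
    (hf : Measurable f) (hg : Measurable g) (hh : AEMeasurable h P)
    (hx : ∀ k, AEMeasurable (x k) P) (hhlaw : P.map h = ν) (hxlaw : ∀ k, P.map (x k) = μ)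
    (hindep : ∀ k, IndepFun h (x k) P) (hfi : Integrable f ν) (hgi : Integrable g μ) :
    ∫ ω, f (h ω) * ∑ k, g (x k ω) ∂P = Fintype.card ι * ((∫ z, f z ∂ν) * ∫ z, g z ∂μ) := by
  have hfh : Integrable (fun ω => f (h ω)) P :=
    (integrable_map_measure hf.aestronglyMeasurable hh).1 (hhlaw ▸ hfi)
  have hgx (k : ι) : Integrable (fun ω => g (x k ω)) P :=
    (integrable_map_measure hg.aestronglyMeasurable (hx k)).1 ((hxlaw k).symm ▸ hgi)
  have hterm (k : ι) : ∫ ω, f (h ω) * g (x k ω) ∂P = (∫ z, f z ∂ν) * ∫ z, g z ∂μ := by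
    rw [(hindep k).integral_fun_comp_mul_comp hh (hx k) hf.aestronglyMeasurable
      hg.aestronglyMeasurable, ← hhlaw, ← hxlaw k, integral_map hh hf.aestronglyMeasurable,
      integral_map (hx k) hg.aestronglyMeasurable]
  have hprod (k : ι) : Integrable (fun ω => f (h ω) * g (x k ω)) P :=
    ((hindep k).comp hf hg).integrable_mul hfh (hgx k)
  simp_rw [Finset.mul_sum]
  rw [integral_finsetSum _ fun k _ => hprod k]
  simp [hterm]

theorem stmt_7_general {Ω : Type*} [MeasurableSpace Ω] (P : Measure Ω)
    (β : ℕ) (m : ℝ) (hm : 1 ≤ m)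
    (x : Fin (2 * β) → Ω → ℝ) (h : Ω → ℝ)
    (hxmeas : ∀ k, Measurable (x k)) (hhmeas : Measurable h)
    (hxlaw : ∀ k, Measure.map (x k) P = arcsineMeasure)
    (hhlaw : Measure.map h P = nakagamiMeasure m)
    (hindep : iIndepFun
      (fun i : Option (Fin (2 * β)) => i.elim h x) P)
    (ε₁ ε₂ : ℝ) :
    ε₁ * (∫ ω, h ω ^ 2 * ∑ k, x k ω ^ 2 ∂P) + ε₂ * (∫ ω, h ω ^ 4 * ∑ k, x k ω ^ 4 ∂P)
      = ε₁ * (β : ℝ) + ε₂ * (3 * (1 + m) / (4 * m)) * (β : ℝ) := by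
  have hm0 : 0 < m := by linarith
  have hpair (k : Fin (2 * β)) : IndepFun h (x k) P := hindep.indepFun (Option.some_ne_none k).symm
  have hpow (n : ℕ) : Measurable fun z : ℝ => z ^ n := measurable_id.pow_const n
  have hmoment (n : ℕ) := integral_comp_mul_sum_comp_of_indepFun (hpow (2 * n)) (hpow (2 * n))
    hhmeas.aemeasurable (fun k => (hxmeas k).aemeasurable) hhlaw hxlaw hpair
    (integrable_pow_nakagamiMeasure hm0 _) (integrable_pow_arcsineMeasure n)
  rw [hmoment 1, hmoment 2, integral_sq_nakagamiMeasure hm0, integral_sq_arcsineMeasure,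
    integral_pow_four_nakagamiMeasure hm0, integral_pow_four_arcsineMeasure, Fintype.card_fin]
  push_cast
  field_simp
  ring

/-- harvested DC without a correlator for an unmodulated chaotic
symbol over a Nakagami-m channel:
ε₁E[h²Σx_k²] + ε₂E[h⁴Σx_k⁴] = ε₁β + ε₂(3(1+m)/(4m))β. -/
theorem stmt_7 {Ω : Type*} [MeasurableSpace Ω] (P : Measure Ω) [IsProbabilityMeasure P]
    (β : ℕ) (hβ : 0 < β) (m : ℝ) (hm : 1 ≤ m)
    (x : Fin (2 * β) → Ω → ℝ) (h : Ω → ℝ)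
    (hxmeas : ∀ k, Measurable (x k)) (hhmeas : Measurable h)
    (hxlaw : ∀ k, Measure.map (x k) P = arcsineMeasure)
    (hhlaw : Measure.map h P = nakagamiMeasure m)
    (hindep : iIndepFun
      (fun i : Option (Fin (2 * β)) => i.elim h x) P)
    (ε₁ ε₂ : ℝ) :
    ε₁ * (∫ ω, h ω ^ 2 * ∑ k, x k ω ^ 2 ∂P) + ε₂ * (∫ ω, h ω ^ 4 * ∑ k, x k ω ^ 4 ∂P)
      = ε₁ * (β : ℝ) + ε₂ * (3 * (1 + m) / (4 * m)) * (β : ℝ) :=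
  stmt_7_general P β m hm x h hxmeas hhmeas hxlaw hhlaw hindep ε₁ ε₂
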